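/- Let A be a centrally symmetric convex polygon in R² with 2n edges, n ≥ 3. For an edge s let P₁(s) be the convex hull of s ∪ (-s), and for a vertex x with cyclic neighbours x-1, x+1 let P₂(x) be the convex hull of x-1, x+1, -(x-1), -(x+1). Then ∑_{s ∈ E(A)} area(P₁(s)) ≤ ∑_{x ∈ V(A)} area(P₂(x)), with equality if and only if n = 3. -/

import Mathlib

open MeasureTheory Set

noncomputable def polarSet {d : ℕ} (A : Set (EuclideanSpace ℝ (Fin d))) :
    Set (EuclideanSpace ℝ (Fin d)) :=
  {x | ∀ a ∈ A, inner ℝ x a ≤ (1 : ℝ)}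

/-- The area (2-dimensional Lebesgue measure) of a subset of the plane. -/
noncomputable def area (S : Set (EuclideanSpace ℝ (Fin 2))) : ℝ :=
  (MeasureTheory.volume S).toReal

/-- The points `x 0, x 1, ..., x (m-1)` are the vertices, in cyclic order, of a convex
polygon: every vertex lies strictly to the left of every directed edge it does not belong to. -/
def IsConvexCyclic {m : ℕ} (x : ZMod m → EuclideanSpace ℝ (Fin 2)) : Prop :=
  ∀ k : ZMod m, ∀ p ∈ Set.range x, p ≠ x k → p ≠ x (k + 1) →
    0 < (x (k + 1) - x k) 0 * (p - x k) 1 - (x (k + 1) - x k) 1 * (p - x k) 0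

/-!
Both parallelograms are centred at the origin, so their areas are `2 |x_{k-1} × x_k|` and
`2 |x_{k-1} × x_{k+1}|`, and convexity makes both cross products positive. The difference of the
two sums is then `∑ₖ x_{k-1} × eₖ`, where `eₖ = x_{k+1} - xₖ` are the edge vectors. Central
symmetry gives `2 x_{k-1} = -(e_{k-1} + eₖ + ⋯ + e_{k+n-2})`, which turns the difference into
`½ ∑ₖ ∑_{2 ≤ j ≤ n-2} eₖ × e_{k+j}`. Every term is positive, because the edges
`e_{k+1}, …, e_{k+n-1}` of a convex centrally symmetric polygon all point strictly to the left of
`eₖ`; the inner sum is empty exactly when `n = 3`.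
-/

open scoped Pointwise

namespace CentrallySymmetricPolygon

noncomputable def cross : EuclideanSpace ℝ (Fin 2) →ₗ[ℝ] EuclideanSpace ℝ (Fin 2) →ₗ[ℝ] ℝ :=
  LinearMap.mk₂ ℝ (fun u v => u 0 * v 1 - u 1 * v 0)
    (fun _ _ _ => by simp only [PiLp.add_apply]; ring)
    (fun _ _ _ => by simp only [PiLp.smul_apply, smul_eq_mul]; ring)
    (fun _ _ _ => by simp only [PiLp.add_apply]; ring)
    (fun _ _ _ => by simp only [PiLp.smul_apply, smul_eq_mul]; ring)

lemma cross_apply (u v : EuclideanSpace ℝ (Fin 2)) : cross u v = u 0 * v 1 - u 1 * v 0 := rfl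

@[simp]
lemma cross_self (u : EuclideanSpace ℝ (Fin 2)) : cross u u = 0 := by
  rw [cross_apply]; ring

lemma cross_swap (u v : EuclideanSpace ℝ (Fin 2)) : cross v u = -cross u v := by
  simp only [cross_apply]; ring

lemma cross_mul_cross (a b c v : EuclideanSpace ℝ (Fin 2)) :
    cross a c * cross b v = cross b c * cross a v + cross a b * cross c v := by
  simp only [cross_apply]; ring

lemma volume_parallelepiped_fin_two (u v : EuclideanSpace ℝ (Fin 2)) :
    volume (parallelepiped ![u, v]) = ENNReal.ofReal |cross u v| := by
  rw [← (EuclideanSpace.basisFun (Fin 2) ℝ).addHaar_eq_volume, Measure.addHaar_parallelepiped,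
    Module.Basis.det_apply, Matrix.det_fin_two]
  congr 2
  simp only [Module.Basis.toMatrix_apply, OrthonormalBasis.coe_toBasis_repr_apply,
    EuclideanSpace.basisFun_repr, Matrix.cons_val_zero, Matrix.cons_val_one, cross_apply]
  ring

lemma convexHull_pair_neg_pair (a b : EuclideanSpace ℝ (Fin 2)) :
    convexHull ℝ {a, b, -a, -b} = -a +ᵥ parallelepiped ![a + b, a - b] := by
  rw [parallelepiped_eq_convexHull, ← convexHull_vadd, Fin.sum_univ_two]
  congr 1
  ext z
  simp only [Set.mem_vadd_set, Set.mem_add, Set.mem_insert_iff, Set.mem_singleton_iff,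
    vadd_eq_add, Matrix.cons_val_zero, Matrix.cons_val_one]
  constructor
  · rintro (rfl | rfl | rfl | rfl)
    · exact ⟨_, ⟨_, Or.inr rfl, _, Or.inr rfl, rfl⟩, by abel⟩
    · exact ⟨_, ⟨_, Or.inr rfl, _, Or.inl rfl, rfl⟩, by abel⟩
    · exact ⟨_, ⟨_, Or.inl rfl, _, Or.inl rfl, rfl⟩, by abel⟩
    · exact ⟨_, ⟨_, Or.inl rfl, _, Or.inr rfl, rfl⟩, by abel⟩
  · rintro ⟨_, ⟨_, (rfl | rfl), _, (rfl | rfl), rfl⟩, rfl⟩ <;> abel_nf <;> simp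

lemma area_convexHull_pair_neg_pair (a b : EuclideanSpace ℝ (Fin 2)) :
    area (convexHull ℝ {a, b, -a, -b}) = 2 * |cross a b| := by
  have hdet : cross (a + b) (a - b) = -2 * cross a b := by
    simp only [cross_apply, PiLp.add_apply, PiLp.sub_apply]; ring
  rw [area, convexHull_pair_neg_pair, measure_vadd, volume_parallelepiped_fin_two, hdet,
    abs_mul, ENNReal.toReal_ofReal (by positivity)]
  norm_num

section Edges

variable {R E : Type*} [AddMonoidWithOne R] [AddCommGroup E]

def edge (x : R → E) (k : R) : E := x (k + 1) - x k

lemma sub_eq_sum_edge (x : R → E) (k : R) (m : ℕ) :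
    x (k + m) - x k = ∑ j ∈ Finset.range m, edge x (k + j) := by
  induction m with
  | zero => simp
  | succ m ih => rw [Finset.sum_range_succ, ← ih, edge, Nat.cast_succ, ← add_assoc]; abel

end Edges

lemma add_natCast_ne_add_natCast {m a b : ℕ} (k : ZMod m) (ha : a < m) (hb : b < m)
    (hab : a ≠ b) : k + a ≠ k + b := by
  rwa [Ne, add_right_inj, ZMod.natCast_eq_natCast_iff', Nat.mod_eq_of_lt ha,
    Nat.mod_eq_of_lt hb]

lemma natCast_add_natCast_self (n : ℕ) : (n : ZMod (2 * n)) + n = 0 := by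
  simpa [two_mul] using ZMod.natCast_self (2 * n)

section Convex

variable {m : ℕ} {x : ZMod m → EuclideanSpace ℝ (Fin 2)}

lemma cross_edge_sub_pos (hinj : Function.Injective x) (hcyc : IsConvexCyclic x)
    {k p : ZMod m} (hk : p ≠ k) (hk1 : p ≠ k + 1) : 0 < cross (edge x k) (x p - x k) :=
  hcyc k (x p) ⟨p, rfl⟩ (hinj.ne hk) (hinj.ne hk1)

lemma cross_edge_sub_nonneg (hinj : Function.Injective x) (hcyc : IsConvexCyclic x)
    (k p : ZMod m) : 0 ≤ cross (edge x k) (x p - x k) := by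
  by_cases hk : p = k
  · simp [hk]
  by_cases hk1 : p = k + 1
  · exact hk1 ▸ (cross_self (edge x k)).ge
  exact (cross_edge_sub_pos hinj hcyc hk hk1).le

lemma cross_edge_sub_pos_of_lt (hinj : Function.Injective x) (hcyc : IsConvexCyclic x)
    (k : ZMod m) {j : ℕ} (hj : 2 ≤ j) (hjm : j < m) :
    0 < cross (edge x k) (x (k + j) - x k) := by
  refine cross_edge_sub_pos hinj hcyc ?_ ?_
  · simpa using add_natCast_ne_add_natCast k hjm (b := 0) (by omega) (by omega)
  · simpa using add_natCast_ne_add_natCast k hjm (b := 1) (by omega) (by omega)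

lemma cross_edge_edge_succ_pos (hinj : Function.Injective x) (hcyc : IsConvexCyclic x)
    (hm : 2 < m) (k : ZMod m) : 0 < cross (edge x k) (edge x (k + 1)) := by
  have h := cross_edge_sub_pos_of_lt hinj hcyc k le_rfl hm
  rw [sub_eq_sum_edge, Finset.sum_range_succ, Finset.sum_range_one, map_add] at h
  simpa using h

end Convex

lemma edge_add_natCast {R E : Type*} [AddCommMonoidWithOne R] [AddCommGroup E] {x : R → E}
    {n : ℕ} (hanti : ∀ k, x (k + n) = -x k) (k : R) : edge x (k + n) = -edge x k := by
  rw [edge, add_right_comm, hanti, hanti, edge, neg_sub_neg, neg_sub]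

section Symmetric

variable {n : ℕ} {x : ZMod (2 * n) → EuclideanSpace ℝ (Fin 2)}

lemma cross_succ_pos (hn : 2 ≤ n) (hinj : Function.Injective x) (hcyc : IsConvexCyclic x)
    (hanti : ∀ k, x (k + n) = -x k) (k : ZMod (2 * n)) : 0 < cross (x k) (x (k + 1)) := by
  have h := cross_edge_sub_pos_of_lt hinj hcyc k hn (by omega)
  rw [hanti] at h
  simp only [edge, cross_apply, PiLp.sub_apply, PiLp.neg_apply] at h ⊢
  linarith

lemma cross_pred_succ_pos (hn : 3 ≤ n) (hinj : Function.Injective x) (hcyc : IsConvexCyclic x)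
    (hanti : ∀ k, x (k + n) = -x k) (k : ZMod (2 * n)) : 0 < cross (x (k - 1)) (x (k + 1)) := by
  have h₁ := cross_edge_sub_pos_of_lt hinj hcyc k (j := n - 1) (by omega) (by omega)
  have h₂ := cross_edge_sub_pos_of_lt hinj hcyc (k - 1) (j := n + 2) (by omega) (by omega)
  rw [show k + ((n - 1 : ℕ) : ZMod (2 * n)) = k - 1 + n by
    push_cast [Nat.cast_sub (by omega : 1 ≤ n)]; ring, hanti] at h₁
  rw [show k - 1 + ((n + 2 : ℕ) : ZMod (2 * n)) = k + 1 + n by push_cast; ring, hanti] at h₂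
  simp only [edge, sub_add_cancel, cross_apply, PiLp.sub_apply, PiLp.neg_apply] at h₁ h₂ ⊢
  linarith

lemma cross_edge_edge_pos (hinj : Function.Injective x) (hcyc : IsConvexCyclic x)
    (hanti : ∀ k, x (k + n) = -x k) (k : ZMod (2 * n)) {j : ℕ} (hj : 1 ≤ j) (hjn : j < n) :
    0 < cross (edge x k) (edge x (k + j)) := by
  induction j, hj using Nat.le_induction with
  | base => simpa using cross_edge_edge_succ_pos hinj hcyc (by omega) k
  | succ j hj ih =>
    rw [show k + ((j + 1 : ℕ) : ZMod (2 * n)) = k + j + 1 by push_cast; ring]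
    set a := edge x k
    set b := edge x (k + j)
    set c := edge x (k + j + 1)
    set v := x (k + n) - x (k + j + 1)
    -- `v` points from the common vertex of `b` and `c` to the antipode of the start of `a`:
    -- convexity makes `a × v, b × v > 0` and `c × v ≥ 0`, and `cross_mul_cross` carries
    -- `a × b > 0` over to `a × c > 0`.
    have hab : 0 < cross a b := ih (by omega)
    have hbc : 0 < cross b c := cross_edge_edge_succ_pos hinj hcyc (by omega) (k + j)
    have hcv : 0 ≤ cross c v := cross_edge_sub_nonneg hinj hcyc _ _
    have hav : 0 < cross a v := by
      have h := cross_edge_sub_pos_of_lt hinj hcyc (k + n) (j := j + 1 + n) (by omega) (by omega)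
      rwa [show k + n + ((j + 1 + n : ℕ) : ZMod (2 * n)) = k + j + 1 by
        push_cast; linear_combination natCast_add_natCast_self n, edge_add_natCast hanti,
        map_neg, LinearMap.neg_apply, ← map_neg, neg_sub] at h
    have hbv : 0 < cross b v := by
      have h := cross_edge_sub_pos_of_lt hinj hcyc (k + j) (j := n - j) (by omega) (by omega)
      rwa [show k + j + ((n - j : ℕ) : ZMod (2 * n)) = k + n by
        push_cast [Nat.cast_sub (by omega : j ≤ n)]; ring,
        show x (k + n) - x (k + j) = v + b by simp only [v, b, edge]; abel,
        map_add, cross_self, add_zero] at h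
    refine pos_of_mul_pos_left ?_ hbv.le
    rw [cross_mul_cross a b c v]
    exact add_pos_of_pos_of_nonneg (mul_pos hbc hav) (mul_nonneg hab.le hcv)

end Symmetric

section Sums

variable {m : ℕ} {x : ZMod m → EuclideanSpace ℝ (Fin 2)} {n : ℕ}

lemma two_mul_cross_pred_edge (hanti : ∀ k, x (k + n) = -x k) (hn : 3 ≤ n) (k : ZMod m) :
    2 * cross (x (k - 1)) (edge x k) =
      cross (edge x k) (edge x (k + 1)) - cross (edge x (k - 1)) (edge x k) +
        ∑ j ∈ Finset.range (n - 3), cross (edge x k) (edge x (k + (j + 2 : ℕ))) := by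
  have hx : (2 : ℝ) • x (k - 1) =
      -(edge x (k - 1) + ∑ j ∈ Finset.range (n - 1), edge x (k + j)) := by
    rw [← sub_eq_sum_edge, show k + ((n - 1 : ℕ) : ZMod m) = k - 1 + n by
      push_cast [Nat.cast_sub (by omega : 1 ≤ n)]; ring, hanti, edge, sub_add_cancel, two_smul]
    abel
  obtain ⟨l, rfl⟩ : ∃ l, n = l + 3 := ⟨n - 3, by omega⟩
  rw [show l + 3 - 1 = l + 1 + 1 by omega, Finset.sum_range_succ', Finset.sum_range_succ'] at hx
  rw [← smul_eq_mul, ← LinearMap.smul_apply, ← map_smul, hx]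
  simp only [map_neg, map_add, map_sum, LinearMap.neg_apply, LinearMap.add_apply,
    LinearMap.sum_apply, cross_swap (edge x k), Finset.sum_neg_distrib]
  simp only [Nat.cast_add, Nat.cast_ofNat, Nat.cast_one, Nat.cast_zero, add_zero, zero_add,
    add_assoc, one_add_one_eq_two, cross_self, neg_zero, add_tsub_cancel_right]
  ring

lemma two_mul_sum_cross_pred_succ_sub [NeZero m] (hanti : ∀ k, x (k + n) = -x k)
    (hn : 3 ≤ n) :
    2 * (∑ k, cross (x (k - 1)) (x (k + 1)) - ∑ k, cross (x (k - 1)) (x k)) =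
      ∑ k, ∑ j ∈ Finset.range (n - 3), cross (edge x k) (edge x (k + (j + 2 : ℕ))) := by
  have hshift :
      ∑ k, cross (edge x (k - 1)) (edge x k) = ∑ k, cross (edge x k) (edge x (k + 1)) := by
    simpa using (Equiv.subRight (1 : ZMod m)).sum_comp fun k ↦ cross (edge x k) (edge x (k + 1))
  have hsub (k : ZMod m) : cross (x (k - 1)) (x (k + 1)) - cross (x (k - 1)) (x k) =
      cross (x (k - 1)) (edge x k) := (map_sub _ _ _).symm
  rw [← Finset.sum_sub_distrib, Finset.mul_sum]
  simp only [hsub, two_mul_cross_pred_edge hanti hn, Finset.sum_add_distrib,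
    Finset.sum_sub_distrib, hshift, sub_self, zero_add]

end Sums

end CentrallySymmetricPolygon

open CentrallySymmetricPolygon

/-- In a centrally symmetric convex 2n-gon with n ≥ 3, the sum over edges of the areas of
the type-1 parallelograms is at most the sum over vertices of the areas of the type-2
parallelograms, with equality if and only if n = 3. -/
theorem stmt9 (n : ℕ) (hn : 3 ≤ n) [NeZero (2 * n)]
    (x : ZMod (2 * n) → EuclideanSpace ℝ (Fin 2))
    (hinj : Function.Injective x)
    (hanti : ∀ k, x (k + (n : ZMod (2 * n))) = -x k)
    (hcyc : IsConvexCyclic x) :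
    (∑ k : ZMod (2 * n), area (convexHull ℝ {x (k - 1), x k, -x (k - 1), -x k})) ≤
      (∑ k : ZMod (2 * n),
        area (convexHull ℝ {x (k - 1), x (k + 1), -x (k - 1), -x (k + 1)})) ∧
    ((∑ k : ZMod (2 * n), area (convexHull ℝ {x (k - 1), x k, -x (k - 1), -x k})) =
      (∑ k : ZMod (2 * n),
        area (convexHull ℝ {x (k - 1), x (k + 1), -x (k - 1), -x (k + 1)})) ↔ n = 3) := by
  have hedge (k : ZMod (2 * n)) : area (convexHull ℝ {x (k - 1), x k, -x (k - 1), -x k}) =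
      2 * cross (x (k - 1)) (x k) := by
    have h := cross_succ_pos (by omega) hinj hcyc hanti (k - 1)
    rw [sub_add_cancel] at h
    rw [area_convexHull_pair_neg_pair, abs_of_pos h]
  have hvertex (k : ZMod (2 * n)) :
      area (convexHull ℝ {x (k - 1), x (k + 1), -x (k - 1), -x (k + 1)}) =
        2 * cross (x (k - 1)) (x (k + 1)) := by
    rw [area_convexHull_pair_neg_pair, abs_of_pos (cross_pred_succ_pos hn hinj hcyc hanti k)]
  simp only [hedge, hvertex, ← Finset.mul_sum]
  have hgap := two_mul_sum_cross_pred_succ_sub hanti hn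
  obtain rfl | hn3 := hn.eq_or_lt
  · simp only [tsub_self, Finset.range_zero, Finset.sum_empty, Finset.sum_const_zero] at hgap
    exact ⟨by linarith, iff_of_true (by linarith) rfl⟩
  · have hpos : 0 < ∑ k, ∑ j ∈ Finset.range (n - 3),
        cross (edge x k) (edge x (k + (j + 2 : ℕ))) :=
      Finset.sum_pos (fun k _ ↦ Finset.sum_pos
        (fun j hj ↦ cross_edge_edge_pos hinj hcyc hanti k (by omega)
          (by rw [Finset.mem_range] at hj; omega))
        (Finset.nonempty_range_iff.mpr (by omega))) Finset.univ_nonempty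
    exact ⟨by linarith, iff_of_false (by linarith) (by omega)⟩
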